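/- Determinism of reduction in the CPS fragment: in the symmetric data/codata calculus without μ-abstractions, the one-step reduction relation on closed well-typed commands is deterministic: if c ▷ c₁ and c ▷ c₂ then c₁ = c₂. -/

import Mathlib

namespace SymCalc

/-! Basic syntactic categories of the symmetric data/codata calculus (CPS fragment). -/

abbrev Var := String
abbrev TName := String
abbrev XName := String

inductive Polarity | dat | cod
deriving DecidableEq, Repr

inductive Orientation | prd | con
deriving DecidableEq, Repr

inductive Strategy | cbv | cbn
deriving DecidableEq, Repr

def Polarity.flip : Polarity → Polarity
  | .dat => .cod | .cod => .dat

def Orientation.flip : Orientation → Orientation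
  | .prd => .con | .con => .prd

def Strategy.flip : Strategy → Strategy
  | .cbv => .cbn | .cbn => .cbv

/-- `val p` : the orientation of the canonical xtors of a type of polarity `p`. -/
def Polarity.val : Polarity → Orientation
  | .dat => .prd | .cod => .con

/-- `cnt p` : the orientation of (co)pattern matches on a type of polarity `p`. -/
def Polarity.cnt : Polarity → Orientation
  | .dat => .con | .cod => .prd

/-- Typing contexts: each variable carries an orientation (producer/consumer) and a type name.
The head of the list is the innermost binding. -/
abbrev Ctx := List (Var × Orientation × TName)

/-- Erase the variable names of a context, keeping orientations and types. -/
def eraseCtx (Γ : Ctx) : List (Orientation × TName) := Γ.map (·.2)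

mutual
/-- Expressions `e ::= x | 𝒳σ | match_p T { 𝒳Δ ⇒ c; … }`. -/
inductive Expr : Type
  | var : Var → Expr
  | xtor : XName → List Expr → Expr
  | mtch : Polarity → TName → List (XName × Ctx × Cmd) → Expr
/-- Commands `c ::= e₁ ≫ e₂ | Done`. -/
inductive Cmd : Type
  | cut : Expr → Expr → Cmd
  | done : Cmd
end

/-! Substitution. -/

abbrev Env := List (Var × Expr)

/-- Remove the bindings shadowed by the bound variables `xs`. -/
def shadowV (xs : List Var) (m : Env) : Env :=
  m.filter (fun q => ¬ xs.contains q.1)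

mutual
/-- Substitute the (closed) expressions of `m` for free variables in an expression. -/
def substExpr (m : Env) : Expr → Expr
  | .var x => (m.lookup x).getD (.var x)
  | .xtor n σ => .xtor n (σ.attach.map (fun ⟨e, _⟩ => substExpr m e))
  | .mtch p T cases =>
      .mtch p T (cases.attach.map
        (fun ⟨cs, _⟩ => (cs.1, cs.2.1, substCmd (shadowV (cs.2.1.map (·.1)) m) cs.2.2)))
termination_by e => sizeOf e
decreasing_by
  · have h := List.sizeOf_lt_of_mem ‹e ∈ σ›
    simp only [Expr.xtor.sizeOf_spec]; omega
  · have h := List.sizeOf_lt_of_mem ‹cs ∈ cases›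
    obtain ⟨n', Δ', c'⟩ := cs
    simp only [Expr.mtch.sizeOf_spec, Prod.mk.sizeOf_spec] at h ⊢; omega
/-- Substitute the (closed) expressions of `m` for free variables in a command. -/
def substCmd (m : Env) : Cmd → Cmd
  | .cut e₁ e₂ => .cut (substExpr m e₁) (substExpr m e₂)
  | .done => .done
termination_by c => sizeOf c
decreasing_by
  · simp only [Cmd.cut.sizeOf_spec]; omega
  · simp only [Cmd.cut.sizeOf_spec]; omega
end

/-- Pair the variables of a context with the expressions of a substitution. -/
def bindArgs (Δ : Ctx) (σ : List Expr) : Env := List.zip (Δ.map (·.1)) σ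

/-! Programs. -/

/-- A function declaration `𝒳Π := match_p T { 𝒴Δ ⇒ c; … }` (co)pattern matching on
all xtors of the type it belongs to. -/
structure FunDecl where
  name : XName
  args : Ctx
  cases : List (XName × Ctx × Cmd)

/-- A type declaration `s p type T { 𝒳Δ; … } with f₁ … fₙ`. -/
structure TypeDecl where
  strat : Strategy
  pol : Polarity
  name : TName
  xtors : List (XName × Ctx)
  funs : List FunDecl

/-- A program: a list of type declarations together with a top-level command. -/
structure Program where
  decls : List TypeDecl
  main : Cmd

def Program.findType (P : Program) (T : TName) : Option TypeDecl :=
  P.decls.find? (fun td => td.name = T)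

/-! Typing. -/

mutual
/-- Expression typing `Γ ⊢ e :ᵒ T` (producer/consumer typing). -/
inductive HasTy (P : Program) : Ctx → Expr → Orientation → TName → Prop
  | var : ∀ Γ x o T, Γ.lookup x = some (o, T) → HasTy P Γ (.var x) o T
  | xtor : ∀ Γ td X Δ τ, td ∈ P.decls → (X, Δ) ∈ td.xtors →
      SubstTy P Γ τ Δ → HasTy P Γ (.xtor X τ) td.pol.val td.name
  | fn : ∀ Γ td f τ, td ∈ P.decls → f ∈ td.funs →
      SubstTy P Γ τ f.args → HasTy P Γ (.xtor f.name τ) td.pol.cnt td.name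
  | mtch : ∀ Γ td cases, td ∈ P.decls →
      cases.map (fun cs => (cs.1, eraseCtx cs.2.1)) = td.xtors.map (fun g => (g.1, eraseCtx g.2)) →
      (∀ cs ∈ cases, CmdTy P (cs.2.1 ++ Γ) cs.2.2) →
      HasTy P Γ (.mtch td.pol td.name cases) td.pol.cnt td.name
/-- Substitution typing `Γ ⊢ σ : Δ`. -/
inductive SubstTy (P : Program) : Ctx → List Expr → Ctx → Prop
  | nil : ∀ Γ, SubstTy P Γ [] []
  | cons : ∀ Γ σ Δ e x o T, SubstTy P Γ σ Δ → HasTy P Γ e o T →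
      SubstTy P Γ (e :: σ) ((x, o, T) :: Δ)
/-- Command typing `Γ ⊢ c :cmd`. -/
inductive CmdTy (P : Program) : Ctx → Cmd → Prop
  | cut : ∀ Γ e₁ e₂ T, HasTy P Γ e₁ .prd T → HasTy P Γ e₂ .con T → CmdTy P Γ (.cut e₁ e₂)
  | done : ∀ Γ, CmdTy P Γ .done
end

/-! Operational semantics. -/

/-- One-step reduction of closed commands, relative to a program `P`. -/
inductive Step (P : Program) : Cmd → Cmd → Prop
  | mtch : ∀ X σ T cases Δ c, (X, Δ, c) ∈ cases →
      Step P (.cut (.xtor X σ) (.mtch .dat T cases)) (substCmd (bindArgs Δ σ) c)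
  | comtch : ∀ X σ T cases Δ c, (X, Δ, c) ∈ cases →
      Step P (.cut (.mtch .cod T cases) (.xtor X σ)) (substCmd (bindArgs Δ σ) c)
  | conCall : ∀ td f Y Δ c σ τ, td ∈ P.decls → td.pol = .dat → f ∈ td.funs →
      (Y, Δ, c) ∈ f.cases →
      Step P (.cut (.xtor Y τ) (.xtor f.name σ))
        (substCmd (bindArgs f.args σ) (substCmd (bindArgs Δ τ) c))
  | prdCall : ∀ td f Y Δ c σ τ, td ∈ P.decls → td.pol = .cod → f ∈ td.funs →
      (Y, Δ, c) ∈ f.cases →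
      Step P (.cut (.xtor f.name σ) (.xtor Y τ))
        (substCmd (bindArgs f.args σ) (substCmd (bindArgs Δ τ) c))

/-! Well-formedness of programs. -/

/-- Well-formedness of a function declaration belonging to the type declaration `td`
(rule Wf-Fun): the (co)pattern match is exhaustive, binds exactly the declared
argument contexts, and each case body typechecks. -/
def FunWf (P : Program) (td : TypeDecl) (f : FunDecl) : Prop :=
  f.cases.map (fun cs => (cs.1, cs.2.1)) = td.xtors ∧
  ∀ cs ∈ f.cases, CmdTy P (cs.2.1 ++ f.args) cs.2.2

/-- All names used in a program are unambiguous. -/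
def NamesUnambiguous (P : Program) : Prop :=
  (P.decls.map (·.name)).Nodup ∧
  (P.decls.flatMap (fun td => td.xtors.map (·.1) ++ td.funs.map (·.name))).Nodup

/-- Well-formedness of programs (rules Wf-Prog and Wf-Type). -/
def Program.wf (P : Program) : Prop :=
  NamesUnambiguous P ∧
  (∀ td ∈ P.decls, ∀ f ∈ td.funs, FunWf P td f) ∧
  CmdTy P [] P.main

end SymCalc

/-!
The redex determines the rule: Match and Comatch need a match on the consumer resp. producer
side, and a cut of two xtors can fire ConCall and PrdCall at once only if one function name is
also the label of a case of a function, i.e. an xtor name, which unambiguity of names rules out.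
Within one rule the reduct is determined because function names identify their declaration and
the case labels of a well-typed match or of a well-formed function are the distinct xtor names of
a single type.
-/

theorem List.eq_of_mem_of_nodup_flatMap {α β : Type*} {l : List α} {f : α → List β}
    (hl : (l.flatMap f).Nodup) {a b : α} (ha : a ∈ l) (hb : b ∈ l) {x : β}
    (hxa : x ∈ f a) (hxb : x ∈ f b) : a = b := by
  by_contra hab
  have : Std.Symm (Function.onFun List.Disjoint f) := ⟨fun _ _ h => h.symm⟩
  exact (List.nodup_flatMap.1 hl).2.forall ha hb hab hxa hxb

theorem List.snd_eq_of_mem_of_nodup_map_fst {α β : Type*} {l : List (α × β)}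
    (hl : (l.map Prod.fst).Nodup) {a : α} {b b' : β} (h : (a, b) ∈ l) (h' : (a, b') ∈ l) :
    b = b' :=
  Prod.mk_right_injective a (List.inj_on_of_nodup_map hl h h' rfl)

namespace SymCalc

def TypeDecl.names (td : TypeDecl) : List XName :=
  td.xtors.map (·.1) ++ td.funs.map (·.name)

namespace NamesUnambiguous

variable {P : Program} (hP : NamesUnambiguous P) {td td' : TypeDecl}
  (htd : td ∈ P.decls) (htd' : td' ∈ P.decls)
include hP htd

theorem names_nodup : td.names.Nodup :=
  (List.nodup_flatMap.1 hP.2).1 td htd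

theorem xtor_names_nodup : (td.xtors.map (·.1)).Nodup :=
  (List.nodup_append.1 (hP.names_nodup htd)).1

theorem eq_of_mem_cases {cases : List (XName × Ctx × Cmd)}
    (hnames : cases.map (·.1) = td.xtors.map (·.1)) {X : XName} {Δ Δ' : Ctx} {c c' : Cmd}
    (h : (X, Δ, c) ∈ cases) (h' : (X, Δ', c') ∈ cases) : Δ = Δ' ∧ c = c' :=
  Prod.mk.inj (List.snd_eq_of_mem_of_nodup_map_fst (hnames ▸ hP.xtor_names_nodup htd) h h')

include htd'

theorem eq_of_mem_names {x : XName} (hx : x ∈ td.names) (hx' : x ∈ td'.names) : td = td' :=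
  List.eq_of_mem_of_nodup_flatMap hP.2 htd htd' hx hx'

theorem fun_eq_of_name_eq {f f' : FunDecl} (hf : f ∈ td.funs) (hf' : f' ∈ td'.funs)
    (hname : f.name = f'.name) : td = td' ∧ f = f' := by
  obtain rfl : td = td' := hP.eq_of_mem_names htd htd'
    (List.mem_append_right _ (List.mem_map_of_mem hf))
    (hname ▸ List.mem_append_right _ (List.mem_map_of_mem hf'))
  exact ⟨rfl, List.inj_on_of_nodup_map (List.nodup_append.1 (hP.names_nodup htd)).2.1
    hf hf' hname⟩

theorem fun_name_not_mem_xtor_names {f : FunDecl} (hf : f ∈ td.funs) :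
    f.name ∉ td'.xtors.map (·.1) := by
  intro hx
  obtain rfl : td = td' := hP.eq_of_mem_names htd htd'
    (List.mem_append_right _ (List.mem_map_of_mem hf)) (List.mem_append_left _ hx)
  exact (List.nodup_append.1 (hP.names_nodup htd)).2.2 _ hx _ (List.mem_map_of_mem hf) rfl

end NamesUnambiguous

variable {P : Program}

theorem HasTy.mtch_case_names {Γ : Ctx} {p : Polarity} {T T' : TName} {o : Orientation}
    {cases : List (XName × Ctx × Cmd)} (h : HasTy P Γ (.mtch p T cases) o T') :
    ∃ td ∈ P.decls, cases.map (·.1) = td.xtors.map (·.1) := by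
  cases h with
  | mtch _ td _ htd hcases _ =>
    refine ⟨td, htd, ?_⟩
    simpa only [List.map_map, Function.comp_def] using congrArg (List.map Prod.fst) hcases

theorem FunWf.case_names {td : TypeDecl} {f : FunDecl} (hf : FunWf P td f) :
    f.cases.map (·.1) = td.xtors.map (·.1) := by
  simpa only [List.map_map, Function.comp_def] using congrArg (List.map Prod.fst) hf.1

theorem NamesUnambiguous.fun_name_not_mem_cases (hP : NamesUnambiguous P) {td td' : TypeDecl}
    (htd : td ∈ P.decls) (htd' : td' ∈ P.decls) {f f' : FunDecl} (hwf : FunWf P td f)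
    (hf' : f' ∈ td'.funs) {Δ : Ctx} {c : Cmd} : (f'.name, Δ, c) ∉ f.cases := fun hmem =>
  hP.fun_name_not_mem_xtor_names htd' htd hf' (hwf.case_names ▸ List.mem_map_of_mem hmem)

/-- **Determinism of reduction** in the CPS fragment: one-step reduction of closed
well-typed commands (with respect to a well-formed program) is deterministic. -/
theorem step_deterministic (P : Program) (hP : P.wf) (c c₁ c₂ : Cmd)
    (hc : CmdTy P [] c) (h₁ : Step P c c₁) (h₂ : Step P c c₂) :
    c₁ = c₂ := by
  obtain ⟨hNU, hWF, -⟩ := hP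
  cases h₁ with
  | mtch _ _ _ _ _ _ hmem =>
    cases h₂ with
    | mtch _ _ _ _ _ _ hmem' =>
      obtain ⟨_, _, _, _, _, hcon⟩ := hc
      obtain ⟨td, htd, hnames⟩ := hcon.mtch_case_names
      obtain ⟨rfl, rfl⟩ := hNU.eq_of_mem_cases htd hnames hmem hmem'
      rfl
  | comtch _ _ _ _ _ _ hmem =>
    cases h₂ with
    | comtch _ _ _ _ _ _ hmem' =>
      obtain ⟨_, _, _, _, hprd, _⟩ := hc
      obtain ⟨td, htd, hnames⟩ := hprd.mtch_case_names
      obtain ⟨rfl, rfl⟩ := hNU.eq_of_mem_cases htd hnames hmem hmem'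
      rfl
  | conCall td f _ _ _ _ _ htd _ hf hmem =>
    generalize hname : f.name = Z at h₂
    cases h₂ with
    | conCall td' f' _ _ _ _ _ htd' _ hf' hmem' =>
      obtain ⟨rfl, rfl⟩ := hNU.fun_eq_of_name_eq htd htd' hf hf' hname
      obtain ⟨rfl, rfl⟩ := hNU.eq_of_mem_cases htd (hWF td htd f hf).case_names hmem hmem'
      rfl
    | prdCall td' f' _ _ _ _ _ htd' _ hf' _ =>
      exact absurd hmem (hNU.fun_name_not_mem_cases htd htd' (hWF td htd f hf) hf')
  | prdCall td f _ _ _ _ _ htd _ hf hmem =>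
    generalize hname : f.name = Z at h₂
    cases h₂ with
    | prdCall td' f' _ _ _ _ _ htd' _ hf' hmem' =>
      obtain ⟨rfl, rfl⟩ := hNU.fun_eq_of_name_eq htd htd' hf hf' hname
      obtain ⟨rfl, rfl⟩ := hNU.eq_of_mem_cases htd (hWF td htd f hf).case_names hmem hmem'
      rfl
    | conCall td' f' _ _ _ _ _ htd' _ hf' _ =>
      exact absurd hmem (hNU.fun_name_not_mem_cases htd htd' (hWF td htd f hf) hf')

end SymCalc
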